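/- Homographic motions: if x ∈ Eⁿ is a central configuration with constant λ, J a compatible complex structure on E, and (r(t), θ(t)) solves the planar Kepler equations r̈ − rθ̇² = −λ/r² and rθ̈ + 2ṙθ̇ = 0 with r > 0, then z(t) = r(t) exp(θ(t)J) x solves Newton's equations z̈ m = ∇U(z). -/

import Mathlib

/-! Writing `z = r • e` with `e(t) = exp(θ(t) J) x`, the identity `J² = -1` gives the polar
formula `z̈ = (r̈ - r θ̇²) • e + (r θ̈ + 2 ṙ θ̇) • J e`, so the Kepler equations reduce the left side
to `-(λ / r²) m • e`. On the right, `exp(θ J)` is unitary because `J` is skew-adjoint, and `∇U` is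
equivariant under isometries and homogeneous of degree `-2`, so `∇U(r exp(θ J) x) =
r⁻² exp(θ J) ∇U(x)`, which the central configuration equation turns into the same vector. -/

open Finset

/-- The `k`-th component of the gradient `∇U` of the force function. -/
noncomputable def nbodyGradU {n : ℕ} {E : Type*} [NormedAddCommGroup E]
    [InnerProductSpace ℝ E] (m : Fin n → ℝ) (x : Fin n → E) (k : Fin n) : E :=
  ∑ j ∈ univ.erase k, ((m j * m k) / ‖x j - x k‖ ^ 3) • (x j - x k)

section NBody

variable {n : ℕ} {E F : Type*} [NormedAddCommGroup E] [InnerProductSpace ℝ E]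
  [NormedAddCommGroup F] [InnerProductSpace ℝ F] (m : Fin n → ℝ) (x : Fin n → E) (k : Fin n)

theorem nbodyGradU_linearIsometry_comp (T : E →ₗᵢ[ℝ] F) :
    nbodyGradU m (fun i => T (x i)) k = T (nbodyGradU m x k) := by
  simp only [nbodyGradU, map_sum, map_smul, ← map_sub T, LinearIsometry.norm_map]

theorem nbodyGradU_smul {c : ℝ} (hc : 0 < c) :
    nbodyGradU m (fun i => c • x i) k = (c ^ 2)⁻¹ • nbodyGradU m x k := by
  simp only [nbodyGradU, smul_sum, ← smul_sub, norm_smul, Real.norm_of_nonneg hc.le, smul_smul]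
  refine sum_congr rfl fun j _ => congrArg (· • (x j - x k)) ?_
  rcases eq_or_ne ‖x j - x k‖ 0 with h0 | h0
  · simp [h0]
  · field_simp

end NBody

section Rotation

variable {E : Type*} [NormedAddCommGroup E] [InnerProductSpace ℝ E] [CompleteSpace E]

theorem exp_smul_mem_unitary_of_skew {J : E →L[ℝ] E}
    (hskew : ∀ u v : E, (inner ℝ (J u) v : ℝ) = -(inner ℝ u (J v) : ℝ)) (a : ℝ) :
    NormedSpace.exp (a • J) ∈ unitary (E →L[ℝ] E) := by
  have hJ : J ∈ skewAdjoint (E →L[ℝ] E) := by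
    rw [skewAdjoint.mem_iff, ContinuousLinearMap.star_eq_adjoint, eq_comm,
      ContinuousLinearMap.eq_adjoint_iff]
    intro u v
    simp [hskew]
  let +nondep : NormedAlgebra ℚ (E →L[ℝ] E) := .restrictScalars ℚ ℝ _
  exact NormedSpace.exp_mem_unitary_of_mem_skewAdjoint (skewAdjoint.smul_mem a hJ)

end Rotation

section Polar

variable {E : Type*} [NormedAddCommGroup E] [NormedSpace ℝ E]

theorem HasDerivAt.exp_smul_apply [CompleteSpace E] (A : E →L[ℝ] E) {θ : ℝ → ℝ} {θ' t : ℝ}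
    (hθ : HasDerivAt θ θ' t) (u : E) :
    HasDerivAt (fun s => NormedSpace.exp (θ s • A) u)
      (θ' • A (NormedSpace.exp (θ t • A) u)) t := by
  have hexp := (hasDerivAt_exp_smul_const' (𝕂 := ℝ) A (θ t)).scomp t hθ
  exact ((ContinuousLinearMap.apply ℝ E u).hasFDerivAt.comp_hasDerivAt t hexp).congr_deriv
    (by simp [mul_apply_eq_comp])

variable {J : E →L[ℝ] E} {r θ : ℝ → ℝ} {e : ℝ → E}

theorem hasDerivAt_smul_of_hasDerivAt_rotation {t : ℝ} (hr : DifferentiableAt ℝ r t)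
    (he : HasDerivAt e (deriv θ t • J (e t)) t) :
    HasDerivAt (fun s => r s • e s) (deriv r t • e t + (r t * deriv θ t) • J (e t)) t :=
  (hr.hasDerivAt.smul he).congr_deriv (by rw [smul_smul, add_comm])

theorem deriv_deriv_smul_of_hasDerivAt_rotation (hJ2 : J.comp J = -1)
    (hr1 : Differentiable ℝ r) (hr2 : Differentiable ℝ (deriv r))
    (hθ2 : Differentiable ℝ (deriv θ)) (he : ∀ s, HasDerivAt e (deriv θ s • J (e s)) s) (t : ℝ) :
    deriv (deriv fun s => r s • e s) t
      = (deriv (deriv r) t - r t * deriv θ t ^ 2) • e t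
        + (r t * deriv (deriv θ) t + 2 * deriv r t * deriv θ t) • J (e t) := by
  have hderiv : deriv (fun s => r s • e s)
      = fun s => deriv r s • e s + (r s * deriv θ s) • J (e s) :=
    funext fun s => (hasDerivAt_smul_of_hasDerivAt_rotation (hr1 s) (he s)).deriv
  have hJe : HasDerivAt (fun s => J (e s)) (deriv θ t • J (J (e t))) t :=
    (J.hasFDerivAt.comp_hasDerivAt t (he t)).congr_deriv (map_smul J _ _)
  have hJJ : J (J (e t)) = -e t := by
    simpa using DFunLike.congr_fun hJ2 (e t)
  rw [hderiv]
  refine HasDerivAt.deriv <| (((hr2 t).hasDerivAt.smul (he t)).add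
    (((hr1 t).hasDerivAt.mul (hθ2 t).hasDerivAt).smul hJe)).congr_deriv ?_
  rw [hJJ, Pi.mul_apply]
  module

end Polar

theorem homographic_motion_general {n : ℕ} {E : Type*} [NormedAddCommGroup E]
    [InnerProductSpace ℝ E] [FiniteDimensional ℝ E]
    (m : Fin n → ℝ)
    (x : Fin n → E)
    (lam : ℝ)
    (hcentral : ∀ k, nbodyGradU m x k = -(lam * m k) • x k)
    (J : E →L[ℝ] E)
    (hskew : ∀ u v : E, (inner ℝ (J u) v : ℝ) = -(inner ℝ u (J v) : ℝ))
    (hJ2 : J.comp J = -1)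
    (r θ : ℝ → ℝ) (hr : ∀ t, 0 < r t)
    (hr1 : Differentiable ℝ r) (hr2 : Differentiable ℝ (deriv r))
    (hθ1 : Differentiable ℝ θ) (hθ2 : Differentiable ℝ (deriv θ))
    (hkepler_rad : ∀ t, deriv (deriv r) t - r t * (deriv θ t) ^ 2 = -lam / (r t) ^ 2)
    (hkepler_ang : ∀ t, r t * deriv (deriv θ) t + 2 * deriv r t * deriv θ t = 0) :
    ∀ t k, m k • deriv (deriv fun s : ℝ => r s • (NormedSpace.exp (θ s • J)) (x k)) t
      = nbodyGradU m (fun i => r t • (NormedSpace.exp (θ t • J)) (x i)) k := by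
  intro t k
  set U := NormedSpace.exp (θ t • J)
  have hrot : nbodyGradU m (fun i => U (x i)) k = U (nbodyGradU m x k) :=
    nbodyGradU_linearIsometry_comp m x k
      (Unitary.linearIsometryEquiv ⟨U, exp_smul_mem_unitary_of_skew hskew (θ t)⟩).toLinearIsometry
  rw [deriv_deriv_smul_of_hasDerivAt_rotation hJ2 hr1 hr2 hθ2
      (fun s => (hθ1 s).hasDerivAt.exp_smul_apply J (x k)) t,
    hkepler_rad, hkepler_ang, zero_smul, add_zero, nbodyGradU_smul _ _ _ (hr t), hrot,
    hcentral, map_smul, smul_smul, smul_smul]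
  congr 1
  ring

/-- Homographic motions: if `x` is central with constant `λ`, `J` a compatible complex
structure, and `(r, θ)` solves the planar Kepler equations in polar coordinates, then
`z(t) = r(t) exp(θ(t) J) x` solves Newton's equations. -/
theorem homographic_motion {n : ℕ} {E : Type*} [NormedAddCommGroup E]
    [InnerProductSpace ℝ E] [FiniteDimensional ℝ E]
    (m : Fin n → ℝ) (hm : ∀ k, 0 < m k)
    (x : Fin n → E) (hcol : ∀ j k : Fin n, j ≠ k → x j ≠ x k)
    (lam : ℝ)
    (hcentral : ∀ k, nbodyGradU m x k = -(lam * m k) • x k)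
    (J : E →L[ℝ] E)
    (hskew : ∀ u v : E, (inner ℝ (J u) v : ℝ) = -(inner ℝ u (J v) : ℝ))
    (hJ2 : J.comp J = -1)
    (r θ : ℝ → ℝ) (hr : ∀ t, 0 < r t)
    (hr1 : Differentiable ℝ r) (hr2 : Differentiable ℝ (deriv r))
    (hθ1 : Differentiable ℝ θ) (hθ2 : Differentiable ℝ (deriv θ))
    (hkepler_rad : ∀ t, deriv (deriv r) t - r t * (deriv θ t) ^ 2 = -lam / (r t) ^ 2)
    (hkepler_ang : ∀ t, r t * deriv (deriv θ) t + 2 * deriv r t * deriv θ t = 0) :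
    ∀ t k, m k • deriv (deriv fun s : ℝ => r s • (NormedSpace.exp (θ s • J)) (x k)) t
      = nbodyGradU m (fun i => r t • (NormedSpace.exp (θ t • J)) (x i)) k :=
  homographic_motion_general m x lam hcentral J hskew hJ2 r θ hr hr1 hr2 hθ1 hθ2 hkepler_rad
    hkepler_ang
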